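/- arXiv:2503.21951 — 2 statements merged into one kernel-verified Lean document; each statement's English description precedes it below -/
import Mathlib

section
/- Let f be a polynomial over ℤ in n variables that is d-partite with respect to a map part : {1,…,n} → {1,…,d}, and let v, r ∈ ℤⁿ. For each s ∈ {0,1}^d define u_s ∈ ℤⁿ by (u_s)_i = −v_i + r_i if s_{part(i)} = 1 and (u_s)_i = −v_i − r_i if s_{part(i)} = 0. Then ∑_{s ∈ {0,1}^d} ∑_{ℓ=0}^{d} (−1)^{d−ℓ} f_ℓ(u_s) = (−2)^d · f(v), where f_ℓ denotes the homogeneous component of f of degree ℓ. -/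
/-! Since `f` has degree at most `d` and `f_ℓ` is homogeneous of degree `ℓ`, the inner sum is
`(-1)^d f(-u_s)`. A monomial of `f` is a product of distinct variables lying in distinct parts,
so its sum over all `s` factors over the parts: a part containing the variable `i` contributes
`(v_i - r_i) + (v_i + r_i) = 2 v_i`, and a part containing none contributes `2`. Hence
`∑_s f(-u_s) = 2^d f(v)`. -/

/-- A polynomial `f ∈ ℤ[x₁,…,xₙ]` is `d`-partite with respect to `part : {1,…,n} → {1,…,d}`
if every monomial of `f` is multilinear and no two distinct variables occurring in the same
monomial have the same image under `part`. -/
def IsPartite {n d : ℕ} (part : Fin n → Fin d) (f : MvPolynomial (Fin n) ℤ) : Prop :=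
  ∀ m ∈ f.support, (∀ i, m i ≤ 1) ∧ Set.InjOn part {i | i ∈ (m : Fin n →₀ ℕ).support}

open Finset

theorem Finset.filter_fiber_eq_singleton_of_injOn {ι α : Type*} [DecidableEq α] {S : Finset ι}
    {p : ι → α} (hp : Set.InjOn p S) {i : ι} (hi : i ∈ S) :
    {k ∈ S | p k = p i} = {i} := by
  ext k
  simp only [mem_filter, mem_singleton]
  exact ⟨fun ⟨hk, hki⟩ => hp hk hi hki, by rintro rfl; exact ⟨hi, rfl⟩⟩

theorem Finset.sum_prod_comp_of_injOn {ι α β R : Type*} [Fintype α] [DecidableEq α] [Fintype β]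
    [CommSemiring R] {S : Finset ι} {p : ι → α} (hp : Set.InjOn p S) (g : ι → β → R) :
    ∑ s : α → β, ∏ i ∈ S, g i (s (p i))
      = (Fintype.card β : R) ^ (Fintype.card α - #S) * ∏ i ∈ S, ∑ b, g i b := by
  set F : α → β → R := fun j b => ∏ i ∈ S with p i = j, g i b
  have hfiber (s : α → β) : ∏ i ∈ S, g i (s (p i)) = ∏ j, F j (s j) := by
    rw [← Finset.prod_fiberwise S p]
    exact prod_congr rfl fun j _ => prod_congr rfl fun i hi => by rw [(mem_filter.mp hi).2]
  have himage : ∏ j ∈ S.image p, ∑ b, F j b = ∏ i ∈ S, ∑ b, g i b := by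
    rw [prod_image hp]
    refine prod_congr rfl fun i hi => sum_congr rfl fun b _ => ?_
    simp only [F, filter_fiber_eq_singleton_of_injOn hp hi, prod_singleton]
  have hcompl : ∏ j ∈ (S.image p)ᶜ, ∑ b, F j b = (Fintype.card β : R) ^ (Fintype.card α - #S) := by
    rw [← card_image_of_injOn hp, ← card_compl]
    refine prod_eq_pow_card fun j hj => ?_
    have hempty : {i ∈ S | p i = j} = ∅ :=
      filter_eq_empty_iff.mpr fun i hi hij => mem_compl.mp hj (hij ▸ mem_image_of_mem p hi)
    simp [F, hempty]
  rw [sum_congr rfl fun s _ => hfiber s, ← Fintype.prod_sum, ← prod_mul_prod_compl (S.image p),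
    himage, hcompl, mul_comm]

theorem Finsupp.prod_support_pow_eq_prod_of_le_one {σ M : Type*} [CommMonoid M] {m : σ →₀ ℕ}
    (hm : ∀ i, m i ≤ 1) (x : σ → M) : ∏ i ∈ m.support, x i ^ m i = ∏ i ∈ m.support, x i :=
  Finset.prod_congr rfl fun i hi => by
    rw [le_antisymm (hm i) (Nat.one_le_iff_ne_zero.mpr (mem_support_iff.mp hi)), pow_one]

namespace MvPolynomial

variable {σ R : Type*} [CommRing R]

theorem IsHomogeneous.eval_smul {φ : MvPolynomial σ R} {n : ℕ} (hφ : φ.IsHomogeneous n)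
    (c : R) (x : σ → R) : eval (c • x) φ = c ^ n * eval x φ := by
  simp only [eval_eq, mul_sum, Pi.smul_apply, smul_eq_mul, mul_pow, prod_mul_distrib,
    prod_pow_eq_pow_sum]
  refine sum_congr rfl fun m hm => ?_
  rw [← hφ.degree_eq_sum_deg_support hm]
  ring

theorem sum_neg_one_pow_mul_eval_homogeneousComponent {φ : MvPolynomial σ R} {d : ℕ}
    (hφ : φ.totalDegree ≤ d) (x : σ → R) :
    ∑ ℓ ∈ range (d + 1), (-1) ^ (d - ℓ) * eval x (homogeneousComponent ℓ φ)
      = (-1) ^ d * eval (-x) φ := by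
  have hsum : ∑ ℓ ∈ range (d + 1), homogeneousComponent ℓ φ = φ := by
    rw [← sum_subset (range_subset_range.mpr (Nat.succ_le_succ hφ)), sum_homogeneousComponent]
    exact fun ℓ _ hℓ => homogeneousComponent_eq_zero _ _ (by simpa using hℓ)
  conv_rhs => rw [← hsum, map_sum, mul_sum]
  refine sum_congr rfl fun ℓ hℓ => ?_
  have hsign : (-1 : R) ^ d = (-1) ^ (d - ℓ) * (-1) ^ ℓ := by
    rw [← pow_add, Nat.sub_add_cancel (Nat.lt_succ_iff.mp (mem_range.mp hℓ))]
  rw [← neg_one_smul R x, (homogeneousComponent_isHomogeneous ℓ φ).eval_smul, hsign, mul_assoc,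
    ← mul_assoc ((-1) ^ ℓ), ← pow_add, Even.neg_one_pow ⟨ℓ, rfl⟩, one_mul]

end MvPolynomial

open MvPolynomial

namespace IsPartite

variable {n d : ℕ} {part : Fin n → Fin d} {f : MvPolynomial (Fin n) ℤ}

theorem card_support_le (hf : IsPartite part f) {m : Fin n →₀ ℕ} (hm : m ∈ f.support) :
    #m.support ≤ d := by
  simpa using card_le_card_of_injOn part (fun i _ => mem_univ (part i)) (hf m hm).2

theorem totalDegree_le (hf : IsPartite part f) : f.totalDegree ≤ d :=
  Finset.sup_le fun m hm => calc
    ∑ i ∈ m.support, m i ≤ ∑ _i ∈ m.support, 1 := sum_le_sum fun i _ => (hf m hm).1 i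
    _ = #m.support := by rw [card_eq_sum_ones]
    _ ≤ d := hf.card_support_le hm

theorem sum_eval_comp_part {β : Type*} [Fintype β] (hf : IsPartite part f) (g : Fin n → β → ℤ)
    (v : Fin n → ℤ) (hg : ∀ i, ∑ b, g i b = Fintype.card β * v i) :
    ∑ s : Fin d → β, eval (fun i => g i (s (part i))) f = Fintype.card β ^ d * eval v f := by
  simp only [eval_eq, mul_sum]
  rw [sum_comm]
  refine sum_congr rfl fun m hm => ?_
  rw [← mul_sum]
  simp only [Finsupp.prod_support_pow_eq_prod_of_le_one (hf m hm).1, sum_prod_comp_of_injOn (hf m hm).2, hg,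
    prod_mul_distrib, prod_const, Fintype.card_fin]
  rw [← mul_assoc (_ ^ (d - _)), ← pow_add, Nat.sub_add_cancel (hf.card_support_le hm),
    mul_left_comm]

end IsPartite

/-- For a `d`-partite polynomial `f` over `ℤ` and `v, r ∈ ℤⁿ`, with
`(u_s)_i = −v_i + r_i` if `s_{part(i)} = 1` and `(u_s)_i = −v_i − r_i` otherwise:
`∑_{s ∈ {0,1}^d} ∑_{ℓ=0}^{d} (−1)^{d−ℓ} f_ℓ(u_s) = (−2)^d · f(v)`. -/
theorem sign_pattern_cancellation (n d : ℕ) (part : Fin n → Fin d)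
    (f : MvPolynomial (Fin n) ℤ) (hf : IsPartite part f) (v r : Fin n → ℤ) :
    ∑ s : Fin d → Bool,
        ∑ ℓ ∈ Finset.range (d + 1),
          (-1) ^ (d - ℓ) *
            MvPolynomial.eval
              (fun i => if s (part i) then -v i + r i else -v i - r i)
              (MvPolynomial.homogeneousComponent ℓ f)
      = (-2) ^ d * MvPolynomial.eval v f := by
  have hflip (s : Fin d → Bool) :
      -(fun i => if s (part i) then -v i + r i else -v i - r i)
        = fun i => if s (part i) then v i - r i else v i + r i := by
    ext i; simp only [Pi.neg_apply]; split_ifs <;> ring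
  have hsum := hf.sum_eval_comp_part (fun i (b : Bool) => if b then v i - r i else v i + r i) v
    fun i => by
      simp only [Fintype.sum_bool, Fintype.card_bool, if_true, Bool.false_eq_true, if_false]
      ring
  beta_reduce at hsum
  simp only [sum_neg_one_pow_mul_eval_homogeneousComponent hf.totalDegree_le, hflip, ← mul_sum,
    hsum, Fintype.card_bool]
  rw [← mul_assoc, ← mul_pow]
  norm_num
end

section
/- Let f be a polynomial over ℤ in n variables that is d-partite with respect to a map part : {1,…,n} → {1,…,d}, let t ≥ 1, and let v, r ∈ ℤⁿ. For each s ∈ {0,1}^d define w_s ∈ {0,…,2^t−1}ⁿ by letting (w_s)_i be the residue of −v_i + r_i modulo 2^t if s_{part(i)} = 1, and the residue of −v_i − r_i modulo 2^t if s_{part(i)} = 0. Then ∑_{s ∈ {0,1}^d} ∑_{(b₁,…,b_d) ∈ {0,…,t−1}^d} 2^{b₁+⋯+b_d} · f( bit_{b_{part(1)}}((w_s)₁), …, bit_{b_{part(n)}}((w_s)_n) ) ≡ (−2)^d · f(v) (mod 2^t). -/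
open Finset

theorem Nat.sum_range_two_pow_mul_testBit (x t : ℕ) :
    ∑ b ∈ range t, 2 ^ b * (x.testBit b).toNat = x % 2 ^ t := by
  induction t with
  | zero => simp [Nat.mod_one]
  | succ t ih => rw [sum_range_succ, ih, Nat.toNat_testBit, Nat.mod_pow_succ]

section TwoPowEqZero

variable {R : Type*} [CommRing R] {t : ℕ}

theorem sum_two_pow_eq_neg_one (h2t : (2 : R) ^ t = 0) :
    ∑ β : Fin t, (2 : R) ^ (β : ℕ) = -1 := by
  have h := geom_sum_mul (2 : R) t
  rw [h2t, show (2 : R) - 1 = 1 by norm_num, mul_one, zero_sub] at h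
  rwa [Fin.sum_univ_eq_sum_range (fun β => (2 : R) ^ β)]

theorem sum_two_pow_mul_testBit (h2t : (2 : R) ^ t = 0) (u : ℕ) :
    ∑ β : Fin t, (2 : R) ^ (β : ℕ) * (u.testBit β).toNat = u := by
  rw [Fin.sum_univ_eq_sum_range (fun β => (2 : R) ^ β * (u.testBit β).toNat)]
  have h := congrArg (Nat.cast (R := R)) (Nat.sum_range_two_pow_mul_testBit u t)
  push_cast at h
  rw [h]
  conv_rhs => rw [← Nat.mod_add_div u (2 ^ t)]
  push_cast
  rw [h2t, zero_mul, add_zero]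

theorem sum_sum_two_pow_mul_prod_testBit_of_card_le_one {ι : Type*} {T : Finset ι}
    (hT : #T ≤ 1) (w : ι → Bool → ℕ) (V : ι → R) (h2t : (2 : R) ^ t = 0)
    (hV : ∀ i, (w i true : R) + w i false = -2 * V i) :
    ∑ σ : Bool, ∑ β : Fin t, (2 : R) ^ (β : ℕ) * ∏ i ∈ T, (((w i σ).testBit β).toNat : R)
      = -2 * ∏ i ∈ T, V i := by
  obtain hT | hT := Nat.le_one_iff_eq_zero_or_eq_one.mp hT
  · simp [card_eq_zero.mp hT, sum_two_pow_eq_neg_one h2t]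
  · obtain ⟨i, rfl⟩ := card_eq_one.mp hT
    simp [sum_two_pow_mul_testBit h2t, hV]

theorem sum_sum_two_pow_mul_prod_testBit_of_injOn {ι κ : Type*} [Fintype κ] [DecidableEq κ]
    {part : ι → κ} {S : Finset ι} (hS : Set.InjOn part S) (w : ι → Bool → ℕ) (V : ι → R)
    (h2t : (2 : R) ^ t = 0) (hV : ∀ i, (w i true : R) + w i false = -2 * V i) :
    ∑ s : κ → Bool, ∑ b : κ → Fin t,
        (2 : R) ^ (∑ j, (b j : ℕ)) * ∏ i ∈ S, (((w i (s (part i))).testBit (b (part i))).toNat : R)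
      = (-2) ^ Fintype.card κ * ∏ i ∈ S, V i := by
  set g : κ → Bool → Fin t → R := fun j σ β =>
    2 ^ (β : ℕ) * ∏ i ∈ S with part i = j, (((w i σ).testBit β).toNat : R)
  have hfactor : ∀ (s : κ → Bool) (b : κ → Fin t),
      (2 : R) ^ (∑ j, (b j : ℕ)) * ∏ i ∈ S, (((w i (s (part i))).testBit (b (part i))).toNat : R)
        = ∏ j, g j (s j) (b j) := by
    intro s b
    rw [prod_mul_distrib, prod_pow_eq_pow_sum, ← prod_fiberwise S part]
    congr 1
    refine prod_congr rfl fun j _ => prod_congr rfl fun i hi => ?_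
    rw [(mem_filter.mp hi).2]
  have hfiber : ∀ j, #{i ∈ S | part i = j} ≤ 1 := fun j => card_le_one.mpr fun a ha b hb => by
    rw [mem_filter] at ha hb
    exact hS ha.1 hb.1 (ha.2.trans hb.2.symm)
  calc _ = ∑ s : κ → Bool, ∏ j, ∑ β, g j (s j) β := by
        simp_rw [hfactor, Fintype.prod_sum]
    _ = ∏ j, ∑ σ, ∑ β, g j σ β := by rw [Fintype.prod_sum]
    _ = ∏ j, -2 * ∏ i ∈ S with part i = j, V i := by
        refine prod_congr rfl fun j _ => ?_
        exact sum_sum_two_pow_mul_prod_testBit_of_card_le_one (hfiber j) w V h2t hV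
    _ = (-2) ^ Fintype.card κ * ∏ i ∈ S, V i := by
        rw [prod_mul_distrib, prod_const, card_univ, prod_fiberwise]

end TwoPowEqZero

theorem MvPolynomial.eval_eq_sum_prod_support_of_le_one {σ R : Type*} [CommSemiring R]
    {f : MvPolynomial σ R} (hf : ∀ m ∈ f.support, ∀ i, m i ≤ 1) (x : σ → R) :
    eval x f = ∑ m ∈ f.support, coeff m f * ∏ i ∈ m.support, x i := by
  rw [eval_eq]
  refine sum_congr rfl fun m hm => congrArg _ (prod_congr rfl fun i hi => ?_)
  rw [le_antisymm (hf m hm i) (Nat.one_le_iff_ne_zero.mpr (Finsupp.mem_support_iff.mp hi)),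
    pow_one]

theorem IsPartite.sum_sum_two_pow_mul_eval_testBit {R : Type*} [CommRing R] {n d t : ℕ}
    {part : Fin n → Fin d} {f : MvPolynomial (Fin n) ℤ} (hf : IsPartite part f)
    (w : Fin n → Bool → ℕ) (v : Fin n → ℤ) (h2t : (2 : R) ^ t = 0)
    (hV : ∀ i, (w i true : R) + w i false = -2 * v i) :
    ∑ s : Fin d → Bool, ∑ b : Fin d → Fin t, (2 : R) ^ (∑ j, (b j : ℕ)) *
        ((MvPolynomial.eval (fun i => (((w i (s (part i))).testBit (b (part i))).toNat : ℤ)) f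
          : ℤ) : R)
      = (-2) ^ d * ((MvPolynomial.eval v f : ℤ) : R) := by
  simp only [MvPolynomial.eval_eq_sum_prod_support_of_le_one fun m hm => (hf m hm).1,
    mul_sum, Int.cast_sum, Int.cast_mul, Int.cast_prod, Int.cast_natCast]
  rw [sum_congr rfl fun s _ => sum_comm, sum_comm]
  refine sum_congr rfl fun m hm => ?_
  simp only [mul_left_comm _ ((MvPolynomial.coeff m f : ℤ) : R), ← mul_sum]
  rw [sum_sum_two_pow_mul_prod_testBit_of_injOn (hf m hm).2 w (fun i => (v i : R)) h2t hV,
    Fintype.card_fin, mul_left_comm]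

theorem ZMod.natCast_toNat_emod (x : ℤ) {N : ℕ} (hN : N ≠ 0) :
    (((x % N).toNat : ℕ) : ZMod N) = x := by
  rw [← Int.cast_natCast, Int.toNat_of_nonneg (Int.emod_nonneg x (by exact_mod_cast hN)),
    ZMod.intCast_mod]

theorem bitwise_correctness_identity_general (n d t : ℕ)
    (part : Fin n → Fin d) (f : MvPolynomial (Fin n) ℤ) (hf : IsPartite part f)
    (v r : Fin n → ℤ) :
    (∑ s : Fin d → Bool,
        ∑ b : Fin d → Fin t,
          (2 : ℤ) ^ (∑ j, (b j : ℕ)) *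
            MvPolynomial.eval
              (fun i =>
                ((Nat.testBit
                    (Int.toNat
                      ((if s (part i) then -v i + r i else -v i - r i) % 2 ^ t))
                    (b (part i))).toNat : ℤ))
              f)
      ≡ (-2) ^ d * MvPolynomial.eval v f [ZMOD (2 : ℤ) ^ t] := by
  have h2t : (2 : ZMod (2 ^ t)) ^ t = 0 := by exact_mod_cast ZMod.natCast_self (2 ^ t)
  let w : Fin n → Bool → ℕ := fun i σ =>
    ((if σ then -v i + r i else -v i - r i) % ((2 ^ t : ℕ) : ℤ)).toNat
  have hV : ∀ i, (w i true : ZMod (2 ^ t)) + w i false = -2 * v i := fun i => by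
    simp only [w, ZMod.natCast_toNat_emod _ (pow_ne_zero t two_ne_zero)]
    push_cast
    ring
  rw [show (2 : ℤ) ^ t = ((2 ^ t : ℕ) : ℤ) by norm_cast, ← ZMod.intCast_eq_intCast_iff]
  push_cast
  exact hf.sum_sum_two_pow_mul_eval_testBit w v h2t hV

/-- Full correctness identity for the reduction of Theorem 3.2: for a
`d`-partite `f` over `ℤ`, `t ≥ 1`, `v, r ∈ ℤⁿ`, with `(w_s)_i` the residue of `−v_i ± r_i`
modulo `2^t` according to `s_{part(i)}`:
`∑_{s ∈ {0,1}^d} ∑_{(b₁,…,b_d)} 2^{b₁+⋯+b_d} · f(bit_{b_{part(i)}}((w_s)_i))_i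
  ≡ (−2)^d · f(v) (mod 2^t)`. -/
theorem bitwise_correctness_identity (n d t : ℕ) (ht : 1 ≤ t)
    (part : Fin n → Fin d) (f : MvPolynomial (Fin n) ℤ) (hf : IsPartite part f)
    (v r : Fin n → ℤ) :
    (∑ s : Fin d → Bool,
        ∑ b : Fin d → Fin t,
          (2 : ℤ) ^ (∑ j, (b j : ℕ)) *
            MvPolynomial.eval
              (fun i =>
                ((Nat.testBit
                    (Int.toNat
                      ((if s (part i) then -v i + r i else -v i - r i) % 2 ^ t))
                    (b (part i))).toNat : ℤ))
              f)
      ≡ (-2) ^ d * MvPolynomial.eval v f [ZMOD (2 : ℤ) ^ t] :=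
  bitwise_correctness_identity_general n d t part f hf v r
end
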